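/- Iteration lemma (Lemma 3.3, a variant of Giaquinta's lemma without monotonicity): Let R_0 > 0 and let φ : (0,R_0] → ℝ be nonnegative and bounded. Let A, α, β, ε, B ≥ 0 with β < α, and suppose φ(ρ) ≤ A [ (ρ/R)^α + ε ] φ(R) + B R^β for all 0 < ρ ≤ R ≤ R_0. Then there exists ε_0 > 0 depending only on A, α, β such that if ε < ε_0, then there is a constant C depending only on A, α, β with φ(ρ) ≤ C [ R_0^{−β} ( sup_{(0,R_0]} φ ) ρ^β + B ρ^β ] for all 0 < ρ ≤ R_0. -/

import Mathlib

open Set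

/-- **Lemma 3.3** (a variant of Giaquinta's iteration lemma in which the monotonicity of
`φ` is not assumed). -/
theorem iteration_lemma (A α β : ℝ) (hA : 0 ≤ A) (hα : 0 ≤ α) (hβ : 0 ≤ β)
    (hβα : β < α) :
    ∃ ε₀ : ℝ, 0 < ε₀ ∧ ∃ C : ℝ, 0 < C ∧
      ∀ (R₀ B ε : ℝ) (φ : ℝ → ℝ), 0 < R₀ → 0 ≤ B → 0 ≤ ε → ε < ε₀ →
        (∀ ρ ∈ Ioc (0 : ℝ) R₀, 0 ≤ φ ρ) →
        BddAbove (φ '' Ioc (0 : ℝ) R₀) →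
        (∀ ρ R : ℝ, 0 < ρ → ρ ≤ R → R ≤ R₀ →
          φ ρ ≤ A * ((ρ / R) ^ α + ε) * φ R + B * R ^ β) →
        ∀ ρ ∈ Ioc (0 : ℝ) R₀,
          φ ρ ≤ C * (R₀ ^ (-β) * sSup (φ '' Ioc (0 : ℝ) R₀) * ρ ^ β + B * ρ ^ β) := by
  set γ : ℝ := (α + β) / 2 with hγdef
  have hβγ : β < γ := by rw [hγdef]; linarith
  have hγα : γ < α := by rw [hγdef]; linarith
  set A' : ℝ := max A 1 with hA'def
  have hA1 : (1 : ℝ) ≤ A' := le_max_right _ _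
  have hAA : A ≤ A' := le_max_left _ _
  have hA'pos : (0 : ℝ) < A' := lt_of_lt_of_le one_pos hA1
  have hτex : ∃ τ : ℝ, 0 < τ ∧ τ < 1 ∧ 2 * A' * τ ^ α ≤ τ ^ γ := by
    refine ⟨min (1 / 2) ((1 / (2 * A')) ^ ((α - γ)⁻¹)), ?_, ?_, ?_⟩
    · exact lt_min (by norm_num) (Real.rpow_pos_of_pos (by positivity) _)
    · exact lt_of_le_of_lt (min_le_left _ _) (by norm_num)
    · set τ : ℝ := min (1 / 2) ((1 / (2 * A')) ^ ((α - γ)⁻¹)) with hτdef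
      have hτpos : 0 < τ := lt_min (by norm_num) (Real.rpow_pos_of_pos (by positivity) _)
      have hkey : 2 * A' * τ ^ (α - γ) ≤ 1 := by
        have h1 : τ ^ (α - γ) ≤ 1 / (2 * A') := by
          have hle : τ ≤ (1 / (2 * A')) ^ ((α - γ)⁻¹) := min_le_right _ _
          calc τ ^ (α - γ) ≤ ((1 / (2 * A')) ^ ((α - γ)⁻¹)) ^ (α - γ) :=
                Real.rpow_le_rpow hτpos.le hle (by linarith)
            _ = 1 / (2 * A') := by
                rw [← Real.rpow_mul (by positivity), inv_mul_cancel₀ (by linarith),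
                  Real.rpow_one]
        calc 2 * A' * τ ^ (α - γ) ≤ 2 * A' * (1 / (2 * A')) :=
              mul_le_mul_of_nonneg_left h1 (by positivity)
          _ = 1 := by field_simp
      have hτα : τ ^ α = τ ^ γ * τ ^ (α - γ) := by
        rw [← Real.rpow_add hτpos]; ring_nf
      have hγpos : (0 : ℝ) < τ ^ γ := Real.rpow_pos_of_pos hτpos _
      calc 2 * A' * τ ^ α = τ ^ γ * (2 * A' * τ ^ (α - γ)) := by rw [hτα]; ring
        _ ≤ τ ^ γ * 1 := mul_le_mul_of_nonneg_left hkey hγpos.le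
        _ = τ ^ γ := mul_one _
  obtain ⟨τ, hτpos, hτ1, hkey2⟩ := hτex
  have hτβγ : τ ^ γ < τ ^ β := Real.rpow_lt_rpow_of_exponent_gt hτpos hτ1 hβγ
  set D : ℝ := 1 / (τ ^ β - τ ^ γ) with hDdef
  have hDpos : 0 < D := div_pos one_pos (by linarith)
  have hDmul : (τ ^ β - τ ^ γ) * D = 1 := by
    rw [hDdef, one_div, mul_inv_cancel₀ (by linarith : τ ^ β - τ ^ γ ≠ 0)]
  have hτβpos : (0 : ℝ) < τ ^ β := Real.rpow_pos_of_pos hτpos _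
  have hτα1 : τ ^ α ≤ 1 := Real.rpow_le_one hτpos.le hτ1.le hα
  refine ⟨τ ^ α, Real.rpow_pos_of_pos hτpos _, 2 * A' * τ ^ (-β) * (D + 1), by positivity,
    ?_⟩
  intro R₀ B ε φ hR₀ hB hε hεε₀ hφ0 hbdd hiter ρ hρ
  have hφR₀ : 0 ≤ φ R₀ := hφ0 R₀ ⟨hR₀, le_rfl⟩
  set M : ℝ := φ R₀ + B * R₀ ^ β * D with hMdef
  have hMnn : 0 ≤ M := by
    have : (0:ℝ) ≤ B * R₀ ^ β * D := by positivity
    linarith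
  have hMD : B * R₀ ^ β ≤ (τ ^ β - τ ^ γ) * M := by
    have h1 : (τ ^ β - τ ^ γ) * (B * R₀ ^ β * D) = B * R₀ ^ β := by
      calc (τ ^ β - τ ^ γ) * (B * R₀ ^ β * D) = B * R₀ ^ β * ((τ ^ β - τ ^ γ) * D) := by ring
        _ = B * R₀ ^ β := by rw [hDmul, mul_one]
    nlinarith [mul_le_mul_of_nonneg_left (le_add_of_nonneg_left hφR₀ :
      B * R₀ ^ β * D ≤ M) (le_of_lt (by linarith : (0:ℝ) < τ ^ β - τ ^ γ))]
  -- the iteration on the geometric sequence R₀ * τ ^ k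
  have key : ∀ k : ℕ, φ (R₀ * τ ^ k) ≤ (τ ^ k) ^ β * M := by
    intro k
    induction k with
    | zero =>
        simp only [pow_zero, mul_one, Real.one_rpow, one_mul]
        rw [hMdef]
        have : (0:ℝ) ≤ B * R₀ ^ β * D := by positivity
        linarith
    | succ k ih =>
      have hτk : (0:ℝ) < τ ^ k := pow_pos hτpos k
      have hτk1 : τ ^ (k+1) ≤ τ ^ k := by
        rw [pow_succ]
        exact mul_le_of_le_one_right hτk.le hτ1.le
      have hτkle1 : τ ^ k ≤ 1 := pow_le_one₀ hτpos.le hτ1.le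
      have hRkle : R₀ * τ ^ k ≤ R₀ := mul_le_of_le_one_right hR₀.le hτkle1
      have hstep := hiter (R₀ * τ ^ (k+1)) (R₀ * τ ^ k)
        (by positivity) (mul_le_mul_of_nonneg_left hτk1 hR₀.le) hRkle
      have hratio : (R₀ * τ ^ (k+1)) / (R₀ * τ ^ k) = τ := by
        rw [pow_succ]; field_simp
      rw [hratio] at hstep
      have hφk : 0 ≤ φ (R₀ * τ ^ k) := hφ0 _ ⟨by positivity, hRkle⟩
      have hcoef : A * (τ ^ α + ε) ≤ τ ^ γ := by
        have : A * (τ ^ α + ε) ≤ A' * (τ ^ α + τ ^ α) := by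
          apply mul_le_mul hAA (by linarith) (by positivity) (by linarith)
        nlinarith
      have h1 : A * (τ ^ α + ε) * φ (R₀ * τ ^ k) ≤ τ ^ γ * ((τ ^ k) ^ β * M) := by
        calc A * (τ ^ α + ε) * φ (R₀ * τ ^ k) ≤ τ ^ γ * φ (R₀ * τ ^ k) :=
              mul_le_mul_of_nonneg_right hcoef hφk
          _ ≤ τ ^ γ * ((τ ^ k) ^ β * M) :=
              mul_le_mul_of_nonneg_left ih (Real.rpow_pos_of_pos hτpos _).le
      have h2 : (R₀ * τ ^ k : ℝ) ^ β = R₀ ^ β * (τ ^ k) ^ β :=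
        Real.mul_rpow hR₀.le hτk.le
      have h3 : (τ ^ (k+1) : ℝ) ^ β = (τ ^ k) ^ β * τ ^ β := by
        rw [pow_succ, Real.mul_rpow (le_of_lt hτk) hτpos.le]
      have hτkβ : (0:ℝ) < (τ ^ k) ^ β := Real.rpow_pos_of_pos hτk _
      have h4 : τ ^ γ * ((τ ^ k) ^ β * M) + B * (R₀ ^ β * (τ ^ k) ^ β)
          ≤ (τ ^ k) ^ β * τ ^ β * M := by
        have h5 := mul_le_mul_of_nonneg_left hMD hτkβ.le
        have h6 : (τ ^ k) ^ β * ((τ ^ β - τ ^ γ) * M)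
            = (τ ^ k) ^ β * τ ^ β * M - τ ^ γ * ((τ ^ k) ^ β * M) := by ring
        linarith [h5, h6.le, h6.ge]
      calc φ (R₀ * τ ^ (k+1)) ≤ A * (τ ^ α + ε) * φ (R₀ * τ ^ k) + B * (R₀ * τ ^ k) ^ β :=
            hstep
        _ ≤ τ ^ γ * ((τ ^ k) ^ β * M) + B * (R₀ ^ β * (τ ^ k) ^ β) := by
            rw [h2]; linarith [h1]
        _ ≤ (τ ^ k) ^ β * τ ^ β * M := h4
        _ = (τ ^ (k+1)) ^ β * M := by rw [h3]
  -- choose k with R₀ * τ ^ (k+1) < ρ ≤ R₀ * τ ^ k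
  obtain ⟨hρ0, hρR₀⟩ := hρ
  have hexists : ∃ n : ℕ, R₀ * τ ^ n < ρ := by
    obtain ⟨n, hn⟩ := exists_pow_lt_of_lt_one (div_pos hρ0 hR₀) hτ1
    exact ⟨n, by rw [mul_comm]; exact (lt_div_iff₀ hR₀).mp hn⟩
  have hkex : ∃ k : ℕ, R₀ * τ ^ (k + 1) < ρ ∧ ρ ≤ R₀ * τ ^ k := by
    have hn := Nat.find_spec hexists
    have hn0 : Nat.find hexists ≠ 0 := by
      intro h
      rw [h] at hn; simp at hn; linarith
    obtain ⟨k, hk⟩ := Nat.exists_eq_succ_of_ne_zero hn0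
    rw [hk] at hn
    refine ⟨k, hn, ?_⟩
    by_contra h
    have h2 : Nat.find hexists ≤ k := Nat.find_le (not_le.mp h)
    omega
  obtain ⟨k, hn, hkn⟩ := hkex
  -- apply the hypothesis once more with R = R₀ * τ ^ k
  have hτk : (0:ℝ) < τ ^ k := pow_pos hτpos k
  have hτkle1 : τ ^ k ≤ 1 := pow_le_one₀ hτpos.le hτ1.le
  have hRkle : R₀ * τ ^ k ≤ R₀ := mul_le_of_le_one_right hR₀.le hτkle1
  have hstep := hiter ρ (R₀ * τ ^ k) hρ0 hkn hRkle
  have hratio1 : (ρ / (R₀ * τ ^ k)) ^ α ≤ 1 :=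
    Real.rpow_le_one (by positivity) ((div_le_one (by positivity)).mpr hkn) hα
  have hφk := key k
  have hφknn : 0 ≤ φ (R₀ * τ ^ k) := hφ0 _ ⟨by positivity, hRkle⟩
  have hcoef : A * ((ρ / (R₀ * τ ^ k)) ^ α + ε) ≤ 2 * A' := by
    have h1 : (ρ / (R₀ * τ ^ k)) ^ α + ε ≤ 2 := by
      have : ε ≤ 1 := le_trans hεε₀.le hτα1
      linarith
    have h2 : (0:ℝ) ≤ (ρ / (R₀ * τ ^ k)) ^ α + ε := by positivity
    calc A * ((ρ / (R₀ * τ ^ k)) ^ α + ε) ≤ A' * 2 :=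
          mul_le_mul hAA h1 h2 (by linarith)
      _ = 2 * A' := by ring
  have h2 : (R₀ * τ ^ k : ℝ) ^ β = R₀ ^ β * (τ ^ k) ^ β := Real.mul_rpow hR₀.le hτk.le
  have hτkβbd : (τ ^ k : ℝ) ^ β ≤ ρ ^ β * τ ^ (-β) * R₀ ^ (-β) := by
    have h1 : (τ ^ k : ℝ) ≤ ρ / (R₀ * τ) := by
      rw [le_div_iff₀ (by positivity)]
      calc τ ^ k * (R₀ * τ) = R₀ * τ ^ (k+1) := by ring
        _ ≤ ρ := hn.le
    calc (τ ^ k : ℝ) ^ β ≤ (ρ / (R₀ * τ)) ^ β :=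
          Real.rpow_le_rpow hτk.le h1 hβ
      _ = ρ ^ β * τ ^ (-β) * R₀ ^ (-β) := by
          rw [Real.div_rpow hρ0.le (by positivity), Real.mul_rpow hR₀.le hτpos.le,
            Real.rpow_neg hτpos.le, Real.rpow_neg hR₀.le, div_eq_mul_inv, mul_inv]
          ring
  -- bound φ R₀ by the sup
  have hsup : φ R₀ ≤ sSup (φ '' Ioc (0:ℝ) R₀) :=
    le_csSup hbdd ⟨R₀, ⟨hR₀, le_rfl⟩, rfl⟩
  have hsupnn : 0 ≤ sSup (φ '' Ioc (0:ℝ) R₀) := le_trans hφR₀ hsup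
  have hρβ : (0:ℝ) < ρ ^ β := Real.rpow_pos_of_pos hρ0 _
  have hR₀β : (0:ℝ) < R₀ ^ β := Real.rpow_pos_of_pos hR₀ _
  have hR₀mβ : R₀ ^ (-β) = (R₀ ^ β)⁻¹ := Real.rpow_neg hR₀.le β
  have hτmβ : (0:ℝ) < τ ^ (-β) := Real.rpow_pos_of_pos hτpos _
  have hX : (0:ℝ) < (τ ^ k) ^ β := Real.rpow_pos_of_pos hτk β
  have main : φ ρ ≤ 2 * A' * ((τ ^ k) ^ β) * (M + B * R₀ ^ β) := by
    have hstep2 : A * ((ρ / (R₀ * τ ^ k)) ^ α + ε) * φ (R₀ * τ ^ k)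
        ≤ 2 * A' * ((τ ^ k) ^ β * M) :=
      mul_le_mul hcoef hφk hφknn (by positivity)
    have hextra : (0:ℝ) ≤ (2 * A' - 1) * ((τ ^ k) ^ β * (B * R₀ ^ β)) :=
      mul_nonneg (by linarith) (by positivity)
    have hring : 2 * A' * ((τ ^ k) ^ β) * (M + B * R₀ ^ β)
        - (2 * A' * ((τ ^ k) ^ β * M) + B * (R₀ ^ β * (τ ^ k) ^ β))
        = (2 * A' - 1) * ((τ ^ k) ^ β * (B * R₀ ^ β)) := by ring
    calc φ ρ ≤ A * ((ρ / (R₀ * τ ^ k)) ^ α + ε) * φ (R₀ * τ ^ k) + B * (R₀ * τ ^ k) ^ β :=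
          hstep
      _ ≤ 2 * A' * ((τ ^ k) ^ β * M) + B * (R₀ ^ β * (τ ^ k) ^ β) := by
          rw [h2]; linarith
      _ ≤ 2 * A' * ((τ ^ k) ^ β) * (M + B * R₀ ^ β) := by linarith
  have hRinv : R₀ ^ β * (R₀ ^ β)⁻¹ = 1 := mul_inv_cancel₀ hR₀β.ne'
  have hD1 : (1:ℝ) ≤ D + 1 := by linarith
  set S := sSup (φ '' Ioc (0:ℝ) R₀) with hSdef
  have hfact : (R₀ ^ β)⁻¹ * φ R₀ + B * (D + 1)
      ≤ (D + 1) * ((R₀ ^ β)⁻¹ * S) + (D + 1) * B := by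
    have e1 : (R₀ ^ β)⁻¹ * φ R₀ ≤ (R₀ ^ β)⁻¹ * S :=
      mul_le_mul_of_nonneg_left hsup (inv_nonneg.mpr hR₀β.le)
    have e2 : (R₀ ^ β)⁻¹ * S ≤ (D + 1) * ((R₀ ^ β)⁻¹ * S) :=
      le_mul_of_one_le_left (by positivity) hD1
    linarith
  have hc : (0:ℝ) ≤ 2 * A' * τ ^ (-β) * ρ ^ β := by positivity
  have hfact2 := mul_le_mul_of_nonneg_left hfact hc
  calc φ ρ ≤ 2 * A' * ((τ ^ k) ^ β) * (M + B * R₀ ^ β) := main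
    _ ≤ 2 * A' * (ρ ^ β * τ ^ (-β) * R₀ ^ (-β)) * (M + B * R₀ ^ β) := by
        apply mul_le_mul_of_nonneg_right (mul_le_mul_of_nonneg_left hτkβbd (by positivity))
        have : (0:ℝ) ≤ B * R₀ ^ β := by positivity
        linarith
    _ = 2 * A' * τ ^ (-β) * ρ ^ β * ((R₀ ^ β)⁻¹ * φ R₀ + B * (D + 1)) := by
        rw [hMdef, hR₀mβ]
        linear_combination (2 * A' * τ ^ (-β) * ρ ^ β * (B * D + B)) * hRinv
    _ ≤ 2 * A' * τ ^ (-β) * ρ ^ β * ((D + 1) * ((R₀ ^ β)⁻¹ * S) + (D + 1) * B) := hfact2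
    _ = 2 * A' * τ ^ (-β) * (D + 1) * (R₀ ^ (-β) * S * ρ ^ β + B * ρ ^ β) := by
        rw [hR₀mβ]; ring
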